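/- Let δ₁,…,δ₅ be complex numbers, closed under complex conjugation, satisfying (a) s₁ ≥ 0, (b) 5s₂ − s₁² ≥ 0, (c) 2s₁³ − 15s₁s₂ + 25s₃ ≥ 0, (d) 2000s₄ + 730s₁²s₂ − 73s₁⁴ − 1600s₁s₃ − 625s₂² ≥ 0, and (e) 394s₁⁵ − 4925s₁³s₂ + 12125s₁²s₃ + 9375s₁s₂² − 22500s₁s₄ − 15625s₂s₃ + 22500s₅ ≥ 0. Then (δ₁,…,δ₅) is realizable by a 5×5 entrywise nonnegative persymmetric real matrix; explicitly, setting t = s₁/5, p = (5s₂−s₁²)/40, q = (2s₁³−15s₁s₂+25s₃)/225, r = (2000s₄+730s₁²s₂−73s₁⁴−1600s₁s₃−625s₂²)/16000 and s = (394s₁⁵−4925s₁³s₂+12125s₁²s₃+9375s₁s₂²−22500s₁s₄−15625s₂s₃+22500s₅)/112500, the Toeplitz matrix with rows (t,1,0,0,0), (p,t,1,0,0), (q,p,t,1,0), (r,q,p,t,1), (s,r,q,p,t) is nonnegative, persymmetric, and has characteristic polynomial ∏ᵢ₌₁⁵(X−δᵢ) over ℂ. -/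
import Mathlib


open Matrix Polynomial
open scoped ComplexOrder

theorem det_fin_four' {R : Type*} [CommRing R] (A : Matrix (Fin 4) (Fin 4) R) :
    det A = A 0 0 * det !![A 1 1, A 1 2, A 1 3; A 2 1, A 2 2, A 2 3; A 3 1, A 3 2, A 3 3]
      - A 0 1 * det !![A 1 0, A 1 2, A 1 3; A 2 0, A 2 2, A 2 3; A 3 0, A 3 2, A 3 3]
      + A 0 2 * det !![A 1 0, A 1 1, A 1 3; A 2 0, A 2 1, A 2 3; A 3 0, A 3 1, A 3 3]
      - A 0 3 * det !![A 1 0, A 1 1, A 1 2; A 2 0, A 2 1, A 2 2; A 3 0, A 3 1, A 3 2] := by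
  have h0 : A.submatrix Fin.succ (Fin.succAbove 0)
      = !![A 1 1, A 1 2, A 1 3; A 2 1, A 2 2, A 2 3; A 3 1, A 3 2, A 3 3] := by
    ext i j; fin_cases i <;> fin_cases j <;> rfl
  have h1 : A.submatrix Fin.succ (Fin.succAbove 1)
      = !![A 1 0, A 1 2, A 1 3; A 2 0, A 2 2, A 2 3; A 3 0, A 3 2, A 3 3] := by
    ext i j; fin_cases i <;> fin_cases j <;> rfl
  have h2 : A.submatrix Fin.succ (Fin.succAbove 2)
      = !![A 1 0, A 1 1, A 1 3; A 2 0, A 2 1, A 2 3; A 3 0, A 3 1, A 3 3] := by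
    ext i j; fin_cases i <;> fin_cases j <;> rfl
  have h3 : A.submatrix Fin.succ (Fin.succAbove 3)
      = !![A 1 0, A 1 1, A 1 2; A 2 0, A 2 1, A 2 2; A 3 0, A 3 1, A 3 2] := by
    ext i j; fin_cases i <;> fin_cases j <;> rfl
  rw [Matrix.det_succ_row_zero, Fin.sum_univ_four, h0, h1, h2, h3,
    show ((3:Fin 4):ℕ) = 3 from rfl]
  norm_num
  ring

theorem det_fin_five' {R : Type*} [CommRing R] (A : Matrix (Fin 5) (Fin 5) R) :
    det A = A 0 0 * det (A.submatrix Fin.succ (Fin.succAbove 0))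
      - A 0 1 * det (A.submatrix Fin.succ (Fin.succAbove 1))
      + A 0 2 * det (A.submatrix Fin.succ (Fin.succAbove 2))
      - A 0 3 * det (A.submatrix Fin.succ (Fin.succAbove 3))
      + A 0 4 * det (A.submatrix Fin.succ (Fin.succAbove 4)) := by
  rw [Matrix.det_succ_row_zero, Fin.sum_univ_five,
    show ((3:Fin 5):ℕ) = 3 from rfl, show ((4:Fin 5):ℕ) = 4 from rfl]
  norm_num
  ring

set_option maxHeartbeats 1000000 in
theorem det_toep5 {R : Type*} [CommRing R] (x t p q r s : R) :
    det !![x - t, -1, 0, 0, 0;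
         -p, x - t, -1, 0, 0;
         -q, -p, x - t, -1, 0;
         -r, -q, -p, x - t, -1;
         -s, -r, -q, -p, x - t]
      = x^5 - 5*t*x^4 + (10*t^2-4*p)*x^3 + (-10*t^3+12*t*p-3*q)*x^2
        + (5*t^4-12*t^2*p+6*t*q+3*p^2-2*r)*x
        + (-t^5+4*t^3*p-3*t^2*q-3*t*p^2+2*t*r+2*p*q-s) := by
  set M : Matrix (Fin 5) (Fin 5) R := !![x - t, -1, 0, 0, 0;
         -p, x - t, -1, 0, 0;
         -q, -p, x - t, -1, 0;
         -r, -q, -p, x - t, -1;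
         -s, -r, -q, -p, x - t] with hM
  have h0 : M.submatrix Fin.succ (Fin.succAbove 0)
      = !![x - t, -1, 0, 0; -p, x - t, -1, 0; -q, -p, x - t, -1; -r, -q, -p, x - t] := by
    ext i j; fin_cases i <;> fin_cases j <;> rfl
  have h1 : M.submatrix Fin.succ (Fin.succAbove 1)
      = !![-p, -1, 0, 0; -q, x - t, -1, 0; -r, -p, x - t, -1; -s, -q, -p, x - t] := by
    ext i j; fin_cases i <;> fin_cases j <;> rfl
  rw [det_fin_five', h0, h1, det_fin_four', det_fin_four']
  norm_num [hM, Matrix.det_fin_three, Matrix.cons_val_zero, Matrix.cons_val_one,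
    Matrix.head_cons, Matrix.cons_val_two, Matrix.cons_val_three, Matrix.cons_val_four,
    Matrix.tail_cons, Matrix.empty_val', Matrix.cons_val', Matrix.cons_val_fin_one,
    Matrix.head_fin_const]
  ring

set_option maxHeartbeats 2000000 in
/-- Sufficient conditions for persymmetric (Toeplitz) realizability of a
list of five complex numbers, with the explicit realizing Toeplitz matrix. -/
theorem stmt_7 (δ : Fin 5 → ℂ) (ps : ℕ → ℂ) (hps : ∀ k, ps k = ∑ i, δ i ^ k)
    (hconj : Multiset.map (starRingEnd ℂ) (↑(List.ofFn δ) : Multiset ℂ)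
      = (↑(List.ofFn δ) : Multiset ℂ))
    (ha : 0 ≤ ps 1)
    (hb : 0 ≤ 5 * ps 2 - (ps 1) ^ 2)
    (hc : 0 ≤ 2 * (ps 1) ^ 3 - 15 * ps 1 * ps 2 + 25 * ps 3)
    (hd : 0 ≤ 2000 * ps 4 + 730 * (ps 1) ^ 2 * ps 2 - 73 * (ps 1) ^ 4
      - 1600 * ps 1 * ps 3 - 625 * (ps 2) ^ 2)
    (he : 0 ≤ 394 * (ps 1) ^ 5 - 4925 * (ps 1) ^ 3 * ps 2 + 12125 * (ps 1) ^ 2 * ps 3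
      + 9375 * ps 1 * (ps 2) ^ 2 - 22500 * ps 1 * ps 4 - 15625 * ps 2 * ps 3
      + 22500 * ps 5)
    (t p q r s : ℝ)
    (ht : t = (ps 1).re / 5)
    (hp : p = (5 * (ps 2).re - (ps 1).re ^ 2) / 40)
    (hq : q = (2 * (ps 1).re ^ 3 - 15 * (ps 1).re * (ps 2).re + 25 * (ps 3).re) / 225)
    (hr : r = (2000 * (ps 4).re + 730 * (ps 1).re ^ 2 * (ps 2).re - 73 * (ps 1).re ^ 4
      - 1600 * (ps 1).re * (ps 3).re - 625 * (ps 2).re ^ 2) / 16000)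
    (hsv : s = (394 * (ps 1).re ^ 5 - 4925 * (ps 1).re ^ 3 * (ps 2).re
      + 12125 * (ps 1).re ^ 2 * (ps 3).re + 9375 * (ps 1).re * (ps 2).re ^ 2
      - 22500 * (ps 1).re * (ps 4).re - 15625 * (ps 2).re * (ps 3).re
      + 22500 * (ps 5).re) / 112500) :
    let A : Matrix (Fin 5) (Fin 5) ℝ :=
      !![t, 1, 0, 0, 0;
         p, t, 1, 0, 0;
         q, p, t, 1, 0;
         r, q, p, t, 1;
         s, r, q, p, t]
    (∀ i j, 0 ≤ A i j) ∧ (∀ i j, A i j = A j.rev i.rev) ∧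
      (Matrix.charpoly A).map (algebraMap ℝ ℂ) = ∏ i, (X - C (δ i)) := by
  intro A
  -- realness of the power sums
  have hsum : ∀ g : ℂ → ℂ, ∑ i, g (δ i) = (Multiset.map g ↑(List.ofFn δ)).sum := by
    intro g
    rw [Multiset.map_coe, List.map_ofFn, Multiset.sum_coe, List.sum_ofFn]
    rfl
  have hk : ∀ k : ℕ, ((ps k).re : ℂ) = ps k := by
    intro k
    have h1 : (starRingEnd ℂ) (ps k) = ps k := by
      rw [hps k]
      calc (starRingEnd ℂ) (∑ i, δ i ^ k) = ∑ i, (starRingEnd ℂ) (δ i) ^ k := by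
            simp [map_sum, map_pow]
        _ = (Multiset.map (fun z => (starRingEnd ℂ) z ^ k) ↑(List.ofFn δ)).sum :=
            hsum (fun z => (starRingEnd ℂ) z ^ k)
        _ = (Multiset.map (fun z => z ^ k) (Multiset.map (starRingEnd ℂ) ↑(List.ofFn δ))).sum := by
            rw [Multiset.map_map]; rfl
        _ = (Multiset.map (fun z => z ^ k) ↑(List.ofFn δ)).sum := by rw [hconj]
        _ = ∑ i, δ i ^ k := (hsum _).symm
    exact Complex.conj_eq_iff_re.mp h1
  -- nonnegativity of the real parameters
  rw [← hk 1] at ha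
  rw [← hk 1, ← hk 2] at hb
  rw [← hk 1, ← hk 2, ← hk 3] at hc
  rw [← hk 1, ← hk 2, ← hk 3, ← hk 4] at hd
  rw [← hk 1, ← hk 2, ← hk 3, ← hk 4, ← hk 5] at he
  norm_cast at ha hb hc hd he
  have ht0 : 0 ≤ t := by rw [ht]; linarith
  have hp0 : 0 ≤ p := by rw [hp]; linarith
  have hq0 : 0 ≤ q := by rw [hq]; linarith
  have hr0 : 0 ≤ r := by rw [hr]; linarith
  have hs0 : 0 ≤ s := by rw [hsv]; linarith
  refine ⟨?_, ?_, ?_⟩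
  · intro i j
    fin_cases i <;> fin_cases j <;>
      first
        | exact ht0
        | exact hp0
        | exact hq0
        | exact hr0
        | exact hs0
        | exact zero_le_one
        | exact le_refl 0
  · intro i j
    fin_cases i <;> fin_cases j <;> rfl
  · -- characteristic polynomial
    have hcm : charmatrix A =
        !![X - C t, -1, 0, 0, 0;
           -C p, X - C t, -1, 0, 0;
           -C q, -C p, X - C t, -1, 0;
           -C r, -C q, -C p, X - C t, -1;
           -C s, -C r, -C q, -C p, X - C t] := by
      ext i j
      fin_cases i <;> fin_cases j <;>
        simp [charmatrix_apply_eq, charmatrix_apply_ne, A]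
    apply Polynomial.funext
    intro z
    rw [eval_map, Matrix.charpoly, hcm, ← coe_eval₂RingHom, RingHom.map_det]
    have hm : (eval₂RingHom (algebraMap ℝ ℂ) z).mapMatrix
        !![X - C t, -1, 0, 0, 0;
           -C p, X - C t, -1, 0, 0;
           -C q, -C p, X - C t, -1, 0;
           -C r, -C q, -C p, X - C t, -1;
           -C s, -C r, -C q, -C p, X - C t] =
        !![z - (t:ℂ), -1, 0, 0, 0;
           -(p:ℂ), z - (t:ℂ), -1, 0, 0;
           -(q:ℂ), -(p:ℂ), z - (t:ℂ), -1, 0;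
           -(r:ℂ), -(q:ℂ), -(p:ℂ), z - (t:ℂ), -1;
           -(s:ℂ), -(r:ℂ), -(q:ℂ), -(p:ℂ), z - (t:ℂ)] := by
      rw [RingHom.mapMatrix_apply]
      ext i j
      fin_cases i <;> fin_cases j <;>
        simp [Matrix.map_apply, Complex.coe_algebraMap]
    rw [hm, det_toep5]
    have hev : eval z (∏ i, (X - C (δ i))) = ∏ i, (z - δ i) := by
      simp [eval_prod]
    rw [hev, Fin.prod_univ_five]
    have e1 : ((ps 1 : ℂ)) = δ 0 + δ 1 + δ 2 + δ 3 + δ 4 := by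
      rw [hps 1, Fin.sum_univ_five]; ring
    have e2 : ((ps 2 : ℂ)) = δ 0^2 + δ 1^2 + δ 2^2 + δ 3^2 + δ 4^2 := by
      rw [hps 2, Fin.sum_univ_five]
    have e3 : ((ps 3 : ℂ)) = δ 0^3 + δ 1^3 + δ 2^3 + δ 3^3 + δ 4^3 := by
      rw [hps 3, Fin.sum_univ_five]
    have e4 : ((ps 4 : ℂ)) = δ 0^4 + δ 1^4 + δ 2^4 + δ 3^4 + δ 4^4 := by
      rw [hps 4, Fin.sum_univ_five]
    have e5 : ((ps 5 : ℂ)) = δ 0^5 + δ 1^5 + δ 2^5 + δ 3^5 + δ 4^5 := by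
      rw [hps 5, Fin.sum_univ_five]
    rw [ht, hp, hq, hr, hsv]
    push_cast
    rw [hk 1, hk 2, hk 3, hk 4, hk 5, e1, e2, e3, e4, e5]
    ring
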